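/- Let ℓ : Δ² → [0,∞)² be an admissible (ℓ ∈ 𝓛) strictly proper binary loss function with local expression ℓ̃(t) = ℓ(t, 1−t). Then the signed-curvature numerator ℓ̃₁'(t)ℓ̃₂''(t) − ℓ̃₁''(t)ℓ̃₂'(t) has a constant sign on (0,1), equal to the (constant) sign of ℓ̃₁'(t); in particular, the curvature of the loss curve with respect to the unit normal pointing towards the positive quadrant is strictly positive: κ⁺_ℓ(t) > 0 for all t ∈ (0,1). -/

import Mathlib

open Real Set Filter Topology

noncomputable section

/-- The probability simplex Δ² ⊆ ℝ². -/
def simplex2 : Set (Fin 2 → ℝ) := {p | (∀ i, 0 ≤ p i) ∧ ∑ i, p i = 1}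

/-- The relative interior of Δ². -/
def relint2 : Set (Fin 2 → ℝ) := {p | (∀ i, 0 < p i) ∧ ∑ i, p i = 1}

/-- Properness of a binary loss. -/
def IsProper2 (ℓ : (Fin 2 → ℝ) → Fin 2 → ℝ) : Prop :=
  ∀ p ∈ simplex2, ∀ q ∈ simplex2, ∑ i, ℓ p i * p i ≤ ∑ i, ℓ q i * p i

/-- Strict properness of a binary loss. -/
def IsStrictlyProper2 (ℓ : (Fin 2 → ℝ) → Fin 2 → ℝ) : Prop :=
  IsProper2 ℓ ∧ ∀ p ∈ simplex2, ∀ q ∈ simplex2, q ≠ p →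
    ∑ i, ℓ p i * p i < ∑ i, ℓ q i * p i

/-- The local expression `ℓ̃ᵢ(t) = ℓᵢ(t, 1−t)` in the standard parametrization. -/
def tl (ℓ : (Fin 2 → ℝ) → Fin 2 → ℝ) (i : Fin 2) : ℝ → ℝ := fun t => ℓ ![t, 1 - t] i

/-- Admissibility (membership in 𝓛): `ℓ̃` is C² on (0,1) and `ℓ̃₁'·ℓ̃₂' < 0` there. -/
def IsAdmissible2 (ℓ : (Fin 2 → ℝ) → Fin 2 → ℝ) : Prop :=
  ContDiffOn ℝ 2 (tl ℓ 0) (Set.Ioo 0 1) ∧ ContDiffOn ℝ 2 (tl ℓ 1) (Set.Ioo 0 1) ∧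
    ∀ t ∈ Set.Ioo (0 : ℝ) 1, deriv (tl ℓ 0) t * deriv (tl ℓ 1) t < 0

/-- Curvature of the loss curve with respect to the unit normal pointing towards the
positive quadrant:
`κ⁺_ℓ(t) = sgn(ℓ̃₁')·(ℓ̃₁'ℓ̃₂'' − ℓ̃₁''ℓ̃₂')/(ℓ̃₁'² + ℓ̃₂'²)^{3/2}`. -/
def kplus (ℓ : (Fin 2 → ℝ) → Fin 2 → ℝ) (t : ℝ) : ℝ :=
  Real.sign (deriv (tl ℓ 0) t) *
    (deriv (tl ℓ 0) t * deriv (deriv (tl ℓ 1)) t -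
      deriv (deriv (tl ℓ 0)) t * deriv (tl ℓ 1) t) /
    ((deriv (tl ℓ 0) t) ^ 2 + (deriv (tl ℓ 1) t) ^ 2) ^ ((3 : ℝ) / 2)

/-- Curvature of the log loss curve: `κ⁺_log(t) = t(1−t)/(t² + (1−t)²)^{3/2}`. -/
def klog (t : ℝ) : ℝ := t * (1 - t) / (t ^ 2 + (1 - t) ^ 2) ^ ((3 : ℝ) / 2)

/-- Superprediction set of a binary loss. -/
def spr2 (ℓ : (Fin 2 → ℝ) → Fin 2 → ℝ) : Set (Fin 2 → ℝ) :=
  {x | (∀ i, 0 ≤ x i) ∧ ∃ q ∈ simplex2, ∀ i, ℓ q i ≤ x i}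

/-- The η-exponential projection on ℝ². -/
def Eproj2 (η : ℝ) (y : Fin 2 → ℝ) : Fin 2 → ℝ := fun i => Real.exp (-η * y i)

/-- η-mixability of a binary loss. -/
def IsMixable2 (η : ℝ) (ℓ : (Fin 2 → ℝ) → Fin 2 → ℝ) : Prop :=
  Convex ℝ (Eproj2 η '' spr2 ℓ)

lemma mem_simplex2_aux {t : ℝ} (h0 : 0 ≤ t) (h1 : t ≤ 1) : ![t, 1 - t] ∈ simplex2 := by
  constructor
  · intro i
    fin_cases i <;> simp <;> linarith
  · simp [Fin.sum_univ_two]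

lemma vec_ne_aux {t u : ℝ} (h : u ≠ t) : ![u, 1 - u] ≠ ![t, 1 - t] := by
  intro hEq
  exact h (by simpa using congrFun hEq 0)

/-- Stationarity: `t f'(t) + (1-t) g'(t) = 0` on (0,1). -/
lemma stationary_aux (ℓ : (Fin 2 → ℝ) → Fin 2 → ℝ)
    (hadm : IsAdmissible2 ℓ) (hsp : IsStrictlyProper2 ℓ) :
    ∀ t ∈ Set.Ioo (0 : ℝ) 1,
      t * deriv (tl ℓ 0) t + (1 - t) * deriv (tl ℓ 1) t = 0 := by
  intro t ht
  have hopen : Set.Ioo (0:ℝ) 1 ∈ 𝓝 t := isOpen_Ioo.mem_nhds ht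
  have hfd : DifferentiableAt ℝ (tl ℓ 0) t :=
    ((hadm.1.differentiableOn two_ne_zero) t ht).differentiableAt hopen
  have hgd : DifferentiableAt ℝ (tl ℓ 1) t :=
    ((hadm.2.1.differentiableOn two_ne_zero) t ht).differentiableAt hopen
  have hφ : HasDerivAt (fun u => t * tl ℓ 0 u + (1 - t) * tl ℓ 1 u)
      (t * deriv (tl ℓ 0) t + (1 - t) * deriv (tl ℓ 1) t) t :=
    (hfd.hasDerivAt.const_mul t).add (hgd.hasDerivAt.const_mul (1 - t))
  have hmin : IsLocalMin (fun u => t * tl ℓ 0 u + (1 - t) * tl ℓ 1 u) t := by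
    filter_upwards [hopen] with u hu
    have hp := mem_simplex2_aux ht.1.le ht.2.le
    have hq := mem_simplex2_aux hu.1.le hu.2.le
    have := hsp.1 ![t, 1 - t] hp ![u, 1 - u] hq
    simp only [Fin.sum_univ_two, Matrix.cons_val_zero, Matrix.cons_val_one,
      Matrix.head_cons] at this
    simp only [tl]
    linarith
  exact hmin.hasDerivAt_eq_zero hφ

/-- Key pointwise facts: `f'(t) < 0` and `(f'g'' - f''g')(1-t)² = -f'(t)²`. -/
lemma key_aux (ℓ : (Fin 2 → ℝ) → Fin 2 → ℝ)
    (hadm : IsAdmissible2 ℓ) (hsp : IsStrictlyProper2 ℓ) :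
    ∀ t ∈ Set.Ioo (0 : ℝ) 1,
      deriv (tl ℓ 0) t < 0 ∧
      (deriv (tl ℓ 0) t * deriv (deriv (tl ℓ 1)) t -
        deriv (deriv (tl ℓ 0)) t * deriv (tl ℓ 1) t) * (1 - t) ^ 2 =
        -(deriv (tl ℓ 0) t) ^ 2 := by
  intro t ht
  have hopen : Set.Ioo (0:ℝ) 1 ∈ 𝓝 t := isOpen_Ioo.mem_nhds ht
  have hfd : DifferentiableAt ℝ (tl ℓ 0) t :=
    ((hadm.1.differentiableOn two_ne_zero) t ht).differentiableAt hopen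
  have hgd : DifferentiableAt ℝ (tl ℓ 1) t :=
    ((hadm.2.1.differentiableOn two_ne_zero) t ht).differentiableAt hopen
  have hf'c : ContDiffOn ℝ 1 (deriv (tl ℓ 0)) (Set.Ioo 0 1) :=
    hadm.1.deriv_of_isOpen isOpen_Ioo (by norm_num)
  have hg'c : ContDiffOn ℝ 1 (deriv (tl ℓ 1)) (Set.Ioo 0 1) :=
    hadm.2.1.deriv_of_isOpen isOpen_Ioo (by norm_num)
  have hf'd : DifferentiableAt ℝ (deriv (tl ℓ 0)) t :=
    ((hf'c.differentiableOn one_ne_zero) t ht).differentiableAt hopen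
  have hg'd : DifferentiableAt ℝ (deriv (tl ℓ 1)) t :=
    ((hg'c.differentiableOn one_ne_zero) t ht).differentiableAt hopen
  set a := deriv (tl ℓ 0) t with ha_def
  set b := deriv (tl ℓ 1) t with hb_def
  set A := deriv (deriv (tl ℓ 0)) t with hA_def
  set B := deriv (deriv (tl ℓ 1)) t with hB_def
  -- the derivative of the stationarity identity
  have hF : HasDerivAt (fun u => u * deriv (tl ℓ 0) u + (1 - u) * deriv (tl ℓ 1) u)
      ((1 * a + t * A) + ((-1) * b + (1 - t) * B)) t :=
    ((hasDerivAt_id t).mul hf'd.hasDerivAt).add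
      (((hasDerivAt_id t).const_sub 1).mul hg'd.hasDerivAt)
  have hFeq : (fun u => u * deriv (tl ℓ 0) u + (1 - u) * deriv (tl ℓ 1) u)
      =ᶠ[𝓝 t] fun _ => (0:ℝ) := by
    filter_upwards [hopen] with u hu using stationary_aux ℓ hadm hsp u hu
  have hF0 : HasDerivAt (fun u => u * deriv (tl ℓ 0) u + (1 - u) * deriv (tl ℓ 1) u)
      0 t := hFeq.hasDerivAt_iff.mpr (hasDerivAt_const t (0:ℝ))
  have eq2 : (1 * a + t * A) + ((-1) * b + (1 - t) * B) = 0 := hF.unique hF0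
  have eq1 : t * a + (1 - t) * b = 0 := stationary_aux ℓ hadm hsp t ht
  -- monotonicity of g - f, giving a ≤ b direction info
  have hmono : ∀ u ∈ Set.Ioo t 1,
      tl ℓ 1 u - tl ℓ 0 u > tl ℓ 1 t - tl ℓ 0 t := by
    intro u hu
    have hu' : u ∈ Set.Ioo (0:ℝ) 1 := ⟨lt_trans ht.1 hu.1, hu.2⟩
    have hp := mem_simplex2_aux ht.1.le ht.2.le
    have hq := mem_simplex2_aux hu'.1.le hu'.2.le
    have hne : u ≠ t := ne_of_gt hu.1
    have S1 := hsp.2 ![t, 1 - t] hp ![u, 1 - u] hq (vec_ne_aux hne)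
    have S2 := hsp.2 ![u, 1 - u] hq ![t, 1 - t] hp (vec_ne_aux (Ne.symm hne))
    simp only [Fin.sum_univ_two, Matrix.cons_val_zero, Matrix.cons_val_one,
      Matrix.head_cons] at S1 S2
    have htu : t < u := hu.1
    simp only [tl]
    nlinarith [S1, S2]
  have hslope : 0 ≤ b - a := by
    have hh : HasDerivAt (fun u => tl ℓ 1 u - tl ℓ 0 u) (b - a) t :=
      hgd.hasDerivAt.sub hfd.hasDerivAt
    have htend : Tendsto (slope (fun u => tl ℓ 1 u - tl ℓ 0 u) t) (𝓝[>] t)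
        (𝓝 (b - a)) :=
      (hasDerivAt_iff_tendsto_slope.mp hh).mono_left
        (nhdsWithin_mono t fun x hx => ne_of_gt hx)
    refine ge_of_tendsto htend ?_
    filter_upwards [Ioo_mem_nhdsGT_of_mem (⟨le_refl t, ht.2⟩ : t ∈ Set.Ico t 1)]
      with u hu
    have := hmono u hu
    have hut : 0 < u - t := sub_pos.mpr hu.1
    have hd : (0:ℝ) < ((tl ℓ 1 u - tl ℓ 0 u) - (tl ℓ 1 t - tl ℓ 0 t)) / (u - t) :=
      div_pos (by linarith) hut
    simpa [slope_def_field] using hd.le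
  have hab : a * b < 0 := hadm.2.2 t ht
  have ha : a < 0 := by nlinarith [hab, hslope, sq_nonneg a]
  refine ⟨ha, ?_⟩
  linear_combination (a - (1 - t) * A) * eq1 + ((1 - t) * a) * eq2

/-- For an admissible strictly proper binary loss, the signed-curvature
numerator `ℓ̃₁'ℓ̃₂'' − ℓ̃₁''ℓ̃₂'` has constant sign on (0,1), equal to the (constant) sign
of `ℓ̃₁'`; in particular `κ⁺_ℓ(t) > 0` on (0,1). -/
theorem strictlyProper_curvature_positive (ℓ : (Fin 2 → ℝ) → Fin 2 → ℝ)
    (hrange : ∀ p ∈ simplex2, ∀ i, 0 ≤ ℓ p i)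
    (hadm : IsAdmissible2 ℓ) (hsp : IsStrictlyProper2 ℓ) :
    (∃ ε : ℝ, (ε = 1 ∨ ε = -1) ∧
        ∀ t ∈ Set.Ioo (0 : ℝ) 1,
          Real.sign (deriv (tl ℓ 0) t * deriv (deriv (tl ℓ 1)) t -
            deriv (deriv (tl ℓ 0)) t * deriv (tl ℓ 1) t) = ε ∧
          Real.sign (deriv (tl ℓ 0) t) = ε) ∧
      ∀ t ∈ Set.Ioo (0 : ℝ) 1, 0 < kplus ℓ t := by
  have main : ∀ t ∈ Set.Ioo (0 : ℝ) 1,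
      deriv (tl ℓ 0) t < 0 ∧
      (deriv (tl ℓ 0) t * deriv (deriv (tl ℓ 1)) t -
        deriv (deriv (tl ℓ 0)) t * deriv (tl ℓ 1) t) < 0 := by
    intro t ht
    obtain ⟨ha, hkey⟩ := key_aux ℓ hadm hsp t ht
    refine ⟨ha, ?_⟩
    have ht1 : (0:ℝ) < (1 - t) ^ 2 := by nlinarith [ht.2]
    nlinarith [hkey, ht1, mul_pos_of_neg_of_neg ha ha]
  refine ⟨⟨-1, Or.inr rfl, ?_⟩, ?_⟩
  · intro t ht
    obtain ⟨ha, hN⟩ := main t ht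
    exact ⟨Real.sign_of_neg hN, Real.sign_of_neg ha⟩
  · intro t ht
    obtain ⟨ha, hN⟩ := main t ht
    unfold kplus
    rw [Real.sign_of_neg ha]
    have hb : deriv (tl ℓ 1) t ≠ 0 := by
      intro h
      have := hadm.2.2 t ht
      rw [h] at this
      simp at this
    have hbase : (0:ℝ) < (deriv (tl ℓ 0) t) ^ 2 + (deriv (tl ℓ 1) t) ^ 2 := by
      nlinarith [sq_nonneg (deriv (tl ℓ 1) t), mul_pos_of_neg_of_neg ha ha]
    exact div_pos (by nlinarith) (Real.rpow_pos_of_pos hbase _)
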